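/- For every irrational x ∈ (0,1) and every integer n ≥ 1, x lies strictly between the n-th principal convergent and the n-th pseudo-convergent of its odd-odd continued fraction: (x − p_n/q_n)·(x − p''_n/q''_n) < 0 (here q_n and q''_n are positive). -/

import Mathlib

/-- The odd-odd continued fraction map on `[0,1]`.  For `x ∈ [(k-1)/k, k/(k+1))` with `k ≥ 1`
one has `k = ⌊1/(1-x)⌋`, and the two branches are separated by `(2k-1)/(2k+1)`. -/
noncomputable def oocfT (x : ℝ) : ℝ :=
  if x = 1 then 1
  else if x < (2 * (⌊1 / (1 - x)⌋ : ℝ) - 1) / (2 * (⌊1 / (1 - x)⌋ : ℝ) + 1) then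
    ((⌊1 / (1 - x)⌋ : ℝ) * x - ((⌊1 / (1 - x)⌋ : ℝ) - 1)) /
      ((⌊1 / (1 - x)⌋ : ℝ) - ((⌊1 / (1 - x)⌋ : ℝ) + 1) * x)
  else
    ((⌊1 / (1 - x)⌋ : ℝ) - ((⌊1 / (1 - x)⌋ : ℝ) + 1) * x) /
      ((⌊1 / (1 - x)⌋ : ℝ) * x - ((⌊1 / (1 - x)⌋ : ℝ) - 1))

/-- OOCF partial quotient `a` of a point `y`: `a = k+1` if `y` is in the lower branch
interval `((k-1)/k, (2k-1)/(2k+1))`, and `a = k` if `y ∈ ((2k-1)/(2k+1), k/(k+1))`,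
where `k = ⌊1/(1-y)⌋`. -/
noncomputable def oocfA (y : ℝ) : ℤ :=
  if y < (2 * (⌊1 / (1 - y)⌋ : ℝ) - 1) / (2 * (⌊1 / (1 - y)⌋ : ℝ) + 1) then ⌊1 / (1 - y)⌋ + 1
  else ⌊1 / (1 - y)⌋

/-- OOCF partial quotient `ε` of a point `y`: `ε = -1` on the lower branch interval and
`ε = 1` on the upper one. -/
noncomputable def oocfE (y : ℝ) : ℤ :=
  if y < (2 * (⌊1 / (1 - y)⌋ : ℝ) - 1) / (2 * (⌊1 / (1 - y)⌋ : ℝ) + 1) then -1 else 1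

/-- The OOCF convergents `(p'_n, q'_n, p_n, q_n)` of `x`, defined by
`p'_0 = 1, q'_0 = 0, p_0 = 1, q_0 = 1` and
`p'_n = a_n p_{n-1} - p'_{n-1}`, `q'_n = a_n q_{n-1} - q'_{n-1}`,
`p_n = 2 p'_n + ε_n p_{n-1}`, `q_n = 2 q'_n + ε_n q_{n-1}`,
where `(a_n, ε_n)` are the partial quotients of `x`, i.e. `a_n = oocfA (oocfT^[n-1] x)`,
`ε_n = oocfE (oocfT^[n-1] x)`. -/
noncomputable def oocfConv (x : ℝ) : ℕ → ℤ × ℤ × ℤ × ℤ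
  | 0 => (1, 0, 1, 1)
  | n + 1 =>
    let c := oocfConv x n
    (oocfA (oocfT^[n] x) * c.2.2.1 - c.1,
     oocfA (oocfT^[n] x) * c.2.2.2 - c.2.1,
     2 * (oocfA (oocfT^[n] x) * c.2.2.1 - c.1) + oocfE (oocfT^[n] x) * c.2.2.1,
     2 * (oocfA (oocfT^[n] x) * c.2.2.2 - c.2.1) + oocfE (oocfT^[n] x) * c.2.2.2)

/-- `n`-th sub-convergent numerator `p'_n`. -/
noncomputable def oocfP' (x : ℝ) (n : ℕ) : ℤ := (oocfConv x n).1

/-- `n`-th sub-convergent denominator `q'_n`. -/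
noncomputable def oocfQ' (x : ℝ) (n : ℕ) : ℤ := (oocfConv x n).2.1

/-- `n`-th principal convergent numerator `p_n`. -/
noncomputable def oocfP (x : ℝ) (n : ℕ) : ℤ := (oocfConv x n).2.2.1

/-- `n`-th principal convergent denominator `q_n`. -/
noncomputable def oocfQ (x : ℝ) (n : ℕ) : ℤ := (oocfConv x n).2.2.2

/-- `n`-th pseudo-convergent numerator: `p''_n = p'_n + ε_n p_{n-1}` for `n ≥ 1`
(with the convention `p''_0 = 0`). -/
noncomputable def oocfP'' (x : ℝ) : ℕ → ℤ
  | 0 => 0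
  | n + 1 => oocfP' x (n + 1) + oocfE (oocfT^[n] x) * oocfP x n

/-- `n`-th pseudo-convergent denominator: `q''_n = q'_n + ε_n q_{n-1}` for `n ≥ 1`
(with the convention `q''_0 = 1`). -/
noncomputable def oocfQ'' (x : ℝ) : ℕ → ℤ
  | 0 => 1
  | n + 1 => oocfQ' x (n + 1) + oocfE (oocfT^[n] x) * oocfQ x n


/-!
Both the principal and the pseudo-convergent come from one invariant. Writing `t = T^n x`,
one OOCF step is the Möbius map `y = ((a-1) T y + (a-1+ε)) / (a T y + a + ε)` of determinant
`-ε = ±1`, so by induction `x = (p'_n t + p''_n) / (q'_n t + q''_n)` with `p_n = p'_n + p''_n`,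
`q_n = q'_n + q''_n`, `q'_n ≥ 0`, `q''_n ≥ 1` and `p'_n q''_n - p''_n q'_n = ±1`. Hence `x` is
the image of `t` under a monotone Möbius map sending `0 ↦ p''_n/q''_n` and `1 ↦ p_n/q_n`, and
irrationality keeps `t` strictly inside `(0,1)`.
-/

open Set

lemma mobius_sub_mul_sub_neg {a b c d t x : ℝ} (hc : 0 ≤ c) (hd : 0 < d) (ht : t ∈ Ioo 0 1)
    (hdet : a * d - b * c ≠ 0) (hx : x * (c * t + d) = a * t + b) :
    (x - (a + b) / (c + d)) * (x - b / d) < 0 := by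
  have hden : 0 < c * t + d := by nlinarith [ht.1]
  have hcd : 0 < c + d := by linarith
  have hsub₁ : x - (a + b) / (c + d) = (t - 1) * (a * d - b * c) / ((c * t + d) * (c + d)) := by
    rw [eq_div_iff (by positivity)]
    field_simp
    linear_combination (c + d) * hx
  have hsub₀ : x - b / d = t * (a * d - b * c) / ((c * t + d) * d) := by
    rw [eq_div_iff (by positivity)]
    field_simp
    linear_combination d * hx
  rw [hsub₁, hsub₀, div_mul_div_comm]
  refine div_neg_of_neg_of_pos ?_ (by positivity)
  rw [show (t - 1) * (a * d - b * c) * (t * (a * d - b * c)) =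
    t * (t - 1) * (a * d - b * c) ^ 2 by ring]
  exact mul_neg_of_neg_of_pos (mul_neg_of_pos_of_neg ht.1 (sub_neg.mpr ht.2)) (by positivity)

section Step

variable {y : ℝ}

lemma one_le_floor_one_div_one_sub (hy : y ∈ Ico 0 1) : 1 ≤ ⌊1 / (1 - y)⌋ :=
  Int.le_floor.mpr <| by
    rw [Int.cast_one, le_div_iff₀ (by linarith [hy.2])]
    linarith [hy.1]

lemma oocf_branches (hy : y ∈ Ico 0 1) :
    ∃ k : ℤ, 1 ≤ k ∧ (k : ℝ) * (1 - y) ≤ 1 ∧ 1 < ((k : ℝ) + 1) * (1 - y) ∧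
      (((2 * k + 1) * y ≤ 2 * k - 1 ∧ oocfA y = k + 1 ∧ oocfE y = -1 ∧
          oocfT y = (k * y - (k - 1)) / (k - (k + 1) * y)) ∨
        (2 * k - 1 ≤ (2 * k + 1) * y ∧ oocfA y = k ∧ oocfE y = 1 ∧
          oocfT y = (k - (k + 1) * y) / (k * y - (k - 1)))) := by
  have h1y : 0 < 1 - y := by linarith [hy.2]
  set k := ⌊1 / (1 - y)⌋ with hk
  have hk1 : (1 : ℝ) ≤ k := by exact_mod_cast one_le_floor_one_div_one_sub hy
  refine ⟨k, one_le_floor_one_div_one_sub hy, (le_div_iff₀ h1y).mp (Int.floor_le _),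
    (div_lt_iff₀ h1y).mp (Int.lt_floor_add_one _), ?_⟩
  have hy1 : y ≠ 1 := hy.2.ne
  by_cases hb : y < (2 * (k : ℝ) - 1) / (2 * k + 1)
  · left
    refine ⟨by nlinarith [(lt_div_iff₀ (by linarith : (0 : ℝ) < 2 * k + 1)).mp hb], ?_, ?_, ?_⟩
    · rw [oocfA, ← hk, if_pos hb]
    · rw [oocfE, ← hk, if_pos hb]
    · rw [oocfT, if_neg hy1, ← hk, if_pos hb]
  · right
    refine ⟨by nlinarith [(div_le_iff₀ (by linarith : (0 : ℝ) < 2 * k + 1)).mp (not_lt.mp hb)],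
      ?_, ?_, ?_⟩
    · rw [oocfA, ← hk, if_neg hb]
    · rw [oocfE, ← hk, if_neg hb]
    · rw [oocfT, if_neg hy1, ← hk, if_neg hb]

lemma isUnit_oocfE (y : ℝ) : IsUnit (oocfE y) := by
  rw [Int.isUnit_iff, oocfE]
  split_ifs <;> simp

lemma one_le_oocfA (hy : y ∈ Ico 0 1) : 1 ≤ oocfA y := by
  obtain ⟨k, hk, -, -, ⟨-, hA, -⟩ | ⟨-, hA, -⟩⟩ := oocf_branches hy <;> omega

lemma one_le_oocfA_add_oocfE (hy : y ∈ Ico 0 1) : 1 ≤ oocfA y + oocfE y := by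
  obtain ⟨k, hk, -, -, ⟨-, hA, hE, -⟩ | ⟨-, hA, hE, -⟩⟩ := oocf_branches hy <;> omega

lemma oocfT_mem_Icc (hy : y ∈ Ico 0 1) : oocfT y ∈ Icc 0 1 := by
  obtain ⟨k, hk, hlo, hhi, ⟨hb, -, -, hT⟩ | ⟨hb, -, -, hT⟩⟩ := oocf_branches hy <;>
    rw [hT] <;> have hk' : (1 : ℝ) ≤ k := by exact_mod_cast hk
  · have hD : 0 < (k : ℝ) - (k + 1) * y := by nlinarith
    exact ⟨div_nonneg (by nlinarith) hD.le, (div_le_one hD).mpr (by nlinarith)⟩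
  · have hN : 0 < (k : ℝ) * y - (k - 1) := by nlinarith
    exact ⟨div_nonneg (by nlinarith) hN.le, (div_le_one hN).mpr (by nlinarith)⟩

lemma oocfT_mobius (hy : y ∈ Ico 0 1) :
    y * ((oocfA y : ℝ) * oocfT y + oocfA y + oocfE y) =
      ((oocfA y : ℝ) - 1) * oocfT y + ((oocfA y : ℝ) - 1 + oocfE y) := by
  obtain ⟨k, hk, hlo, hhi, ⟨hb, hA, hE, hT⟩ | ⟨hb, hA, hE, hT⟩⟩ := oocf_branches hy <;>
    rw [hA, hE] <;> push_cast <;> have hk' : (1 : ℝ) ≤ k := by exact_mod_cast hk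
  · have hD : (k : ℝ) - (k + 1) * y ≠ 0 := by nlinarith
    have hTD : oocfT y * ((k : ℝ) - (k + 1) * y) = k * y - (k - 1) := by
      rw [hT, div_mul_cancel₀ _ hD]
    linear_combination -hTD
  · have hN : (k : ℝ) * y - (k - 1) ≠ 0 := by nlinarith
    have hTN : oocfT y * ((k : ℝ) * y - (k - 1)) = k - (k + 1) * y := by
      rw [hT, div_mul_cancel₀ _ hN]
    linear_combination hTN

lemma Irrational.oocfT (hirr : Irrational y) (hy : y ∈ Ico 0 1) : Irrational (oocfT y) := by
  rintro ⟨r, hr⟩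
  have hA : (1 : ℝ) ≤ oocfA y := by exact_mod_cast one_le_oocfA hy
  have hAE : (1 : ℝ) ≤ oocfA y + oocfE y := by exact_mod_cast one_le_oocfA_add_oocfE hy
  have hr0 : (0 : ℝ) ≤ r := hr ▸ (oocfT_mem_Icc hy).1
  have hden : (0 : ℝ) < oocfA y * r + oocfA y + oocfE y := by nlinarith
  refine hirr ⟨((oocfA y - 1) * r + (oocfA y - 1 + oocfE y)) / (oocfA y * r + oocfA y + oocfE y), ?_⟩
  push_cast
  rw [div_eq_iff hden.ne', hr, oocfT_mobius hy]

lemma mapsTo_oocfT :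
    MapsTo oocfT (Ioo 0 1 ∩ {y | Irrational y}) (Ioo 0 1 ∩ {y | Irrational y}) := by
  rintro y ⟨hy, hirr⟩
  have hT := hirr.oocfT (Ioo_subset_Ico_self hy)
  obtain ⟨h0, h1⟩ := oocfT_mem_Icc (Ioo_subset_Ico_self hy)
  exact ⟨⟨h0.lt_of_ne hT.ne_zero.symm, h1.lt_of_ne hT.ne_one⟩, hT⟩

end Step

section Convergents

variable (x : ℝ) (n : ℕ)

lemma oocfP_eq_add : oocfP x n = oocfP' x n + oocfP'' x n := by
  cases n with
  | zero => rfl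
  | succ n => simp only [oocfP, oocfP', oocfP'', oocfConv]; ring

lemma oocfQ_eq_add : oocfQ x n = oocfQ' x n + oocfQ'' x n := by
  cases n with
  | zero => rfl
  | succ n => simp only [oocfQ, oocfQ', oocfQ'', oocfConv]; ring

lemma oocfP'_succ : oocfP' x (n + 1) =
    (oocfA (oocfT^[n] x) - 1) * oocfP' x n + oocfA (oocfT^[n] x) * oocfP'' x n := by
  rw [show oocfP' x (n + 1) = oocfA (oocfT^[n] x) * oocfP x n - oocfP' x n from rfl,
    oocfP_eq_add]
  ring

lemma oocfQ'_succ : oocfQ' x (n + 1) =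
    (oocfA (oocfT^[n] x) - 1) * oocfQ' x n + oocfA (oocfT^[n] x) * oocfQ'' x n := by
  rw [show oocfQ' x (n + 1) = oocfA (oocfT^[n] x) * oocfQ x n - oocfQ' x n from rfl,
    oocfQ_eq_add]
  ring

lemma oocfP''_succ : oocfP'' x (n + 1) =
    (oocfA (oocfT^[n] x) - 1 + oocfE (oocfT^[n] x)) * oocfP' x n +
      (oocfA (oocfT^[n] x) + oocfE (oocfT^[n] x)) * oocfP'' x n := by
  rw [oocfP'', oocfP'_succ, oocfP_eq_add]
  ring

lemma oocfQ''_succ : oocfQ'' x (n + 1) =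
    (oocfA (oocfT^[n] x) - 1 + oocfE (oocfT^[n] x)) * oocfQ' x n +
      (oocfA (oocfT^[n] x) + oocfE (oocfT^[n] x)) * oocfQ'' x n := by
  rw [oocfQ'', oocfQ'_succ, oocfQ_eq_add]
  ring

lemma isUnit_oocfP'_mul_oocfQ''_sub :
    IsUnit (oocfP' x n * oocfQ'' x n - oocfP'' x n * oocfQ' x n) := by
  induction n with
  | zero => exact isUnit_one
  | succ n ih =>
    have hdet : oocfP' x (n + 1) * oocfQ'' x (n + 1) - oocfP'' x (n + 1) * oocfQ' x (n + 1) =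
        -oocfE (oocfT^[n] x) * (oocfP' x n * oocfQ'' x n - oocfP'' x n * oocfQ' x n) := by
      rw [oocfP'_succ, oocfQ'_succ, oocfP''_succ, oocfQ''_succ]
      ring
    rw [hdet]
    exact (isUnit_oocfE _).neg.mul ih

variable {x}

lemma oocfT_iterate_mem_Ioo (hx : x ∈ Ioo 0 1) (hirr : Irrational x) :
    oocfT^[n] x ∈ Ioo 0 1 :=
  (mapsTo_oocfT.iterate n ⟨hx, hirr⟩).1

lemma oocfQ'_nonneg_and_one_le_oocfQ'' (hx : x ∈ Ioo 0 1) (hirr : Irrational x) :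
    0 ≤ oocfQ' x n ∧ 1 ≤ oocfQ'' x n := by
  induction n with
  | zero => exact ⟨le_rfl, le_rfl⟩
  | succ n ih =>
    have hy := Ioo_subset_Ico_self (oocfT_iterate_mem_Ioo n hx hirr)
    have hA := one_le_oocfA hy
    have hAE := one_le_oocfA_add_oocfE hy
    rw [oocfQ'_succ, oocfQ''_succ]
    constructor <;> nlinarith

lemma oocf_mobius_iterate (hx : x ∈ Ioo 0 1) (hirr : Irrational x) :
    x * ((oocfQ' x n : ℝ) * oocfT^[n] x + oocfQ'' x n) =
      (oocfP' x n : ℝ) * oocfT^[n] x + oocfP'' x n := by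
  induction n with
  | zero => simp [oocfP', oocfQ', oocfP'', oocfQ'', oocfConv]
  | succ n ih =>
    have hstep := oocfT_mobius (Ioo_subset_Ico_self (oocfT_iterate_mem_Ioo n hx hirr))
    rw [Function.iterate_succ_apply', oocfQ'_succ, oocfQ''_succ, oocfP'_succ, oocfP''_succ]
    push_cast
    linear_combination ((oocfP' x n : ℝ) - x * oocfQ' x n) * hstep +
      ((oocfA (oocfT^[n] x) : ℝ) * oocfT (oocfT^[n] x) + oocfA (oocfT^[n] x) +
        oocfE (oocfT^[n] x)) * ih

end Convergents

theorem oocf_x_between_principal_and_pseudo_general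
    (x : ℝ) (hx : x ∈ Set.Ioo (0 : ℝ) 1) (hirr : Irrational x)
    (n : ℕ) :
    0 < oocfQ x n ∧ 0 < oocfQ'' x n ∧
      (x - (oocfP x n : ℝ) / (oocfQ x n : ℝ)) *
          (x - (oocfP'' x n : ℝ) / (oocfQ'' x n : ℝ)) < 0 := by
  obtain ⟨hq', hq''⟩ := oocfQ'_nonneg_and_one_le_oocfQ'' n hx hirr
  refine ⟨by rw [oocfQ_eq_add]; omega, by omega, ?_⟩
  rw [oocfP_eq_add, oocfQ_eq_add]
  push_cast
  exact mobius_sub_mul_sub_neg (by exact_mod_cast hq') (by exact_mod_cast hq'')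
    (oocfT_iterate_mem_Ioo n hx hirr)
    (by exact_mod_cast (isUnit_oocfP'_mul_oocfQ''_sub x n).ne_zero)
    (oocf_mobius_iterate n hx hirr)

/-- For irrational `x ∈ (0,1)` and `n ≥ 1`, `x` lies strictly between the principal
convergent `p_n/q_n` and the pseudo-convergent `p''_n/q''_n` (whose denominators are
positive). -/
theorem oocf_x_between_principal_and_pseudo
    (x : ℝ) (hx : x ∈ Set.Ioo (0 : ℝ) 1) (hirr : Irrational x)
    (n : ℕ) (hn : 1 ≤ n) :
    0 < oocfQ x n ∧ 0 < oocfQ'' x n ∧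
      (x - (oocfP x n : ℝ) / (oocfQ x n : ℝ)) *
          (x - (oocfP'' x n : ℝ) / (oocfQ'' x n : ℝ)) < 0 :=
  oocf_x_between_principal_and_pseudo_general x hx hirr n
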